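/- Let U be a finite set, m ≥ 1, and s : Fin m → Set U a family of subsets with ⋃_{i} s(i) = U, and let K ≤ m be a natural number. Define U' = U ⊕ Fin m (disjoint union) and the family s' : Fin m ⊕ Fin m → Set U' by s'(inl i) = inl '' (s i) and s'(inr j) = {inr j}. Then there exists T' ⊆ Fin m ⊕ Fin m with |T'| ≤ K + m and ⋃_{t ∈ T'} s'(t) = U' if and only if there exists T ⊆ Fin m with |T| ≤ K and ⋃_{t ∈ T} s(t) = U. Moreover, in the new instance every element of U' belongs to s'(t) for at most m indices t, and m < K + m whenever K ≥ 1. -/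
import Mathlib


open Set

/-- The family of sets of the augmented Set Cover instance on the universe `U ⊕ Fin m`:
each original set is embedded into the disjoint union, and for each index a dummy
singleton set is added. -/
def coverAux {U : Type*} {m : ℕ} (s : Fin m → Set U) : Fin m ⊕ Fin m → Set (U ⊕ Fin m) :=
  Sum.elim (fun i => Sum.inl '' s i) (fun j => {Sum.inr j})

/-- Core of the reduction showing Set Cover remains NP-complete when every element
belongs to at most `K` of the given sets: the augmented instance (with `m` dummy elements,
`m` dummy singleton sets, and bound `K + m`) has a cover of size at most `K + m` iff the
original instance has a cover of size at most `K`; moreover every element of the new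
universe lies in at most `m` of the new sets, and `m < K + m` whenever `K ≥ 1`. -/
theorem setCover_bounded_occurrence_reduction {U : Type*} [Fintype U] {m : ℕ}
    (hm : 1 ≤ m) (s : Fin m → Set U) (hcover : ⋃ i, s i = Set.univ)
    (K : ℕ) (hK : K ≤ m) :
    ((∃ T' : Finset (Fin m ⊕ Fin m), T'.card ≤ K + m ∧
        (⋃ t ∈ T', coverAux s t) = Set.univ) ↔
      (∃ T : Finset (Fin m), T.card ≤ K ∧ (⋃ t ∈ T, s t) = Set.univ)) ∧
    (∀ x : U ⊕ Fin m, {t | x ∈ coverAux s t}.ncard ≤ m) ∧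
    (1 ≤ K → m < K + m) := by
  refine ⟨⟨?_, ?_⟩, ?_, fun h => by omega⟩
  · rintro ⟨T', hcard, hcov⟩
    have hinr : ∀ j : Fin m, (Sum.inr j : Fin m ⊕ Fin m) ∈ T' := by
      intro j
      have hx : (Sum.inr j : U ⊕ Fin m) ∈ ⋃ t ∈ T', coverAux s t := by
        rw [hcov]; trivial
      simp only [mem_iUnion] at hx
      obtain ⟨t, ht, hx⟩ := hx
      cases t with
      | inl i => simp [coverAux] at hx
      | inr j' =>
        simp only [coverAux, Sum.elim_inr, mem_singleton_iff, Sum.inr.injEq] at hx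
        subst hx; exact ht
    refine ⟨T'.preimage Sum.inl Sum.inl_injective.injOn, ?_, ?_⟩
    · have hA : (T'.preimage Sum.inl Sum.inl_injective.injOn).image Sum.inl ⊆ T' := by
        intro t ht
        simp only [Finset.mem_image, Finset.mem_preimage] at ht
        obtain ⟨i, hi, rfl⟩ := ht; exact hi
      have hB : (Finset.univ.image (Sum.inr : Fin m → Fin m ⊕ Fin m)) ⊆ T' := by
        intro t ht
        simp only [Finset.mem_image] at ht
        obtain ⟨j, _, rfl⟩ := ht; exact hinr j
      have hdisj : Disjoint ((T'.preimage Sum.inl Sum.inl_injective.injOn).image Sum.inl)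
          (Finset.univ.image (Sum.inr : Fin m → Fin m ⊕ Fin m)) := by
        rw [Finset.disjoint_left]
        rintro t ht ht'
        simp only [Finset.mem_image] at ht ht'
        obtain ⟨i, _, rfl⟩ := ht
        obtain ⟨j, _, hj⟩ := ht'
        exact Sum.inl_ne_inr hj.symm
      have hle := Finset.card_le_card (Finset.union_subset hA hB)
      rw [Finset.card_union_of_disjoint hdisj,
        Finset.card_image_of_injective _ Sum.inl_injective,
        Finset.card_image_of_injective _ Sum.inr_injective, Finset.card_univ,
        Fintype.card_fin] at hle
      omega
    · apply Set.eq_univ_of_forall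
      intro u
      have hx : (Sum.inl u : U ⊕ Fin m) ∈ ⋃ t ∈ T', coverAux s t := by
        rw [hcov]; trivial
      simp only [mem_iUnion] at hx
      obtain ⟨t, ht, hx⟩ := hx
      cases t with
      | inl i =>
        simp only [coverAux, Sum.elim_inl, mem_image, Sum.inl.injEq] at hx
        obtain ⟨u', hu', rfl⟩ := hx
        exact mem_iUnion₂.2 ⟨i, Finset.mem_preimage.2 ht, hu'⟩
      | inr j => simp [coverAux] at hx
  · rintro ⟨T, hcard, hcov⟩
    refine ⟨T.image Sum.inl ∪ Finset.univ.image Sum.inr, ?_, ?_⟩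
    · calc (T.image Sum.inl ∪ Finset.univ.image Sum.inr).card
          ≤ (T.image Sum.inl).card + (Finset.univ.image (Sum.inr : Fin m → Fin m ⊕ Fin m)).card :=
            Finset.card_union_le _ _
        _ ≤ K + m := by
            rw [Finset.card_image_of_injective _ Sum.inl_injective,
              Finset.card_image_of_injective _ Sum.inr_injective, Finset.card_univ,
              Fintype.card_fin]
            omega
    · apply Set.eq_univ_of_forall
      rintro (u | j)
      · have : u ∈ ⋃ t ∈ T, s t := by rw [hcov]; trivial
        simp only [mem_iUnion] at this
        obtain ⟨i, hi, hu⟩ := this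
        exact mem_iUnion₂.2 ⟨Sum.inl i,
          Finset.mem_union_left _ (Finset.mem_image_of_mem _ hi),
          ⟨u, hu, rfl⟩⟩
      · exact mem_iUnion₂.2 ⟨Sum.inr j,
          Finset.mem_union_right _ (Finset.mem_image_of_mem _ (Finset.mem_univ j)), rfl⟩
  · rintro (u | j)
    · have hsub : {t | (Sum.inl u : U ⊕ Fin m) ∈ coverAux s t} ⊆
          Sum.inl '' (Set.univ : Set (Fin m)) := by
        rintro (i | j) ht
        · exact ⟨i, trivial, rfl⟩
        · simp [coverAux] at ht
      calc {t | (Sum.inl u : U ⊕ Fin m) ∈ coverAux s t}.ncard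
          ≤ (Sum.inl '' (Set.univ : Set (Fin m))).ncard :=
            Set.ncard_le_ncard hsub (Set.toFinite _)
        _ = (Set.univ : Set (Fin m)).ncard := Set.ncard_image_of_injective _ Sum.inl_injective
        _ = m := by rw [Set.ncard_univ, Nat.card_eq_fintype_card, Fintype.card_fin]
    · have hsub : {t | (Sum.inr j : U ⊕ Fin m) ∈ coverAux s t} ⊆ {Sum.inr j} := by
        rintro (i | j') ht
        · simp only [coverAux, Sum.elim_inl, mem_setOf_eq, mem_image] at ht
          obtain ⟨u, _, hu⟩ := ht
          exact absurd hu (Sum.inl_ne_inr)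
        · simp only [coverAux, Sum.elim_inr, mem_setOf_eq, mem_singleton_iff,
            Sum.inr.injEq] at ht
          simp [ht]
      calc {t | (Sum.inr j : U ⊕ Fin m) ∈ coverAux s t}.ncard
          ≤ ({Sum.inr j} : Set (Fin m ⊕ Fin m)).ncard :=
            Set.ncard_le_ncard hsub (Set.toFinite _)
        _ = 1 := Set.ncard_singleton _
        _ ≤ m := hm
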